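/- arXiv:math/0604408 — 2 statements merged into one kernel-verified Lean document; each statement's English description precedes it below -/
import Mathlib

section
/- Let J be a real 4×4 matrix with J·J = −I₄, and let g and g′ be real symmetric positive definite 4×4 matrices compatible with J, i.e. JᵀgJ = g and Jᵀg′J = g′. Then for every real number F: det g′ = e^{2F} · det g if and only if tr(g⁻¹ g′) = e^{F} · tr(g′⁻¹ g). -/
/-!
A symmetric form `h` with `Jᵀ h J = h` is the real part of a Hermitian form for the complex
structure `J`. In a frame `v, J v, w, J w` with `w` `g`-orthogonal to `v` and `J v`, the Gram
matrix of `h` is the realification of a Hermitian `2 × 2` matrix, whose real determinant is the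
square of its complex determinant `Δ`, and whose inverse is `Δ⁻¹` times the realified complex
adjugate. In such a frame `g` is diagonal, with `Δ = a d`, while `g'` has
`Δ' = a' d' - p² - q² > 0`, and one reads off `det g' = c² det g` and `tr(g⁻¹ g') = c tr(g'⁻¹ g)` with `c = Δ' / (a d) > 0`.
Both sides of the equivalence then say `c = e^F`.
-/

open Matrix

/-- The realification of the Hermitian matrix `[[a, p + q i], [p - q i, d]]`. -/
def hermitianRealForm {R : Type*} [Ring R] (a d p q : R) : Matrix (Fin 4) (Fin 4) R :=
  !![a, 0, p, q; 0, a, -q, p; p, -q, d, 0; q, p, 0, d]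

section HermitianRealForm

variable {R : Type*} [CommRing R] (a d p q a' d' p' q' : R)

theorem det_hermitianRealForm :
    (hermitianRealForm a d p q).det = (a * d - p ^ 2 - q ^ 2) ^ 2 := by
  simp [hermitianRealForm, det_succ_row_zero, Fin.sum_univ_succ, Fin.succAbove]
  ring

theorem hermitianRealForm_mul_hermitianRealForm_swap :
    hermitianRealForm a d p q * hermitianRealForm d a (-p) (-q) =
      (a * d - p ^ 2 - q ^ 2) • (1 : Matrix (Fin 4) (Fin 4) R) := by
  ext i j
  fin_cases i <;> fin_cases j <;>
    simp [hermitianRealForm, mul_apply, Fin.sum_univ_four, one_apply] <;> ring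

theorem trace_hermitianRealForm_mul :
    (hermitianRealForm a d p q * hermitianRealForm a' d' p' q').trace =
      2 * (a * a' + d * d') + 4 * (p * p' + q * q') := by
  simp [hermitianRealForm, trace, Fin.sum_univ_four]
  ring

end HermitianRealForm

section HermitianRealFormField

variable {K : Type*} [Field K] (a d p q a' d' p' q' : K)

theorem inv_hermitianRealForm :
    (hermitianRealForm a d p q)⁻¹ =
      (a * d - p ^ 2 - q ^ 2)⁻¹ • hermitianRealForm d a (-p) (-q) := by
  by_cases hΔ : a * d - p ^ 2 - q ^ 2 = 0
  · rw [hΔ, _root_.inv_zero, zero_smul]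
    apply nonsing_inv_apply_not_isUnit
    simp [det_hermitianRealForm, hΔ]
  · apply inv_eq_right_inv
    rw [Matrix.mul_smul, hermitianRealForm_mul_hermitianRealForm_swap, smul_smul,
      inv_mul_cancel₀ hΔ, one_smul]

theorem trace_inv_hermitianRealForm_mul :
    ((hermitianRealForm a d p q)⁻¹ * hermitianRealForm a' d' p' q').trace =
      (a * d - p ^ 2 - q ^ 2)⁻¹ * (2 * (d * a' + a * d') - 4 * (p * p' + q * q')) := by
  rw [inv_hermitianRealForm, smul_mul, trace_smul, trace_hermitianRealForm_mul, smul_eq_mul]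
  ring

end HermitianRealFormField

theorem pos_of_posDef_hermitianRealForm {a d p q : ℝ} (h : (hermitianRealForm a d p q).PosDef) :
    0 < a ∧ 0 < d ∧ 0 < a * d - p ^ 2 - q ^ 2 := by
  have ha : 0 < a := by simpa [hermitianRealForm] using h.diag_pos (i := 0)
  have hd : 0 < d := by simpa [hermitianRealForm] using h.diag_pos (i := 2)
  -- `(d, 0, -p, -q)` is mapped to `(a d - p² - q²) • e₀`
  have hvalue : star ![d, 0, -p, -q] ⬝ᵥ hermitianRealForm a d p q *ᵥ ![d, 0, -p, -q] =
      d * (a * d - p ^ 2 - q ^ 2) := by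
    simp [hermitianRealForm, dotProduct, mulVec, Fin.sum_univ_four]
    ring
  have hpos := h.dotProduct_mulVec_pos (x := ![d, 0, -p, -q]) (by simp [hd.ne'])
  exact ⟨ha, hd, pos_of_mul_pos_right (hvalue ▸ hpos) hd.le⟩

section Compatible

variable {n R : Type*} [Fintype n] [CommRing R] {J h : Matrix n n R}

theorem Matrix.IsSymm.dotProduct_mulVec_comm (hh : h.IsSymm) (u v : n → R) :
    u ⬝ᵥ h *ᵥ v = v ⬝ᵥ h *ᵥ u := by
  rw [dotProduct_mulVec, ← mulVec_transpose, hh.eq, dotProduct_comm]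

theorem dotProduct_mulVec_mulVec_of_compatible (hJh : Jᵀ * h * J = h) (u v : n → R) :
    (J *ᵥ u) ⬝ᵥ h *ᵥ (J *ᵥ v) = u ⬝ᵥ h *ᵥ v := by
  conv_rhs => rw [← hJh]
  rw [← mulVec_mulVec, ← mulVec_mulVec, dotProduct_mulVec u, vecMul_transpose]

variable [DecidableEq n]

theorem dotProduct_mulVec_of_compatible (hJ2 : J * J = -1) (hJh : Jᵀ * h * J = h)
    (u v : n → R) : (J *ᵥ u) ⬝ᵥ h *ᵥ v = -(u ⬝ᵥ h *ᵥ (J *ᵥ v)) := by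
  have hJJ : J *ᵥ (J *ᵥ v) = -v := by rw [mulVec_mulVec, hJ2, neg_mulVec, one_mulVec]
  have := dotProduct_mulVec_mulVec_of_compatible hJh u (J *ᵥ v)
  rwa [hJJ, mulVec_neg, dotProduct_neg, neg_eq_iff_eq_neg] at this

theorem dotProduct_mulVec_self_of_compatible [NoZeroDivisors R] [CharZero R] (hJ2 : J * J = -1)
    (hh : h.IsSymm) (hJh : Jᵀ * h * J = h) (u : n → R) : u ⬝ᵥ h *ᵥ (J *ᵥ u) = 0 := by
  have := dotProduct_mulVec_of_compatible hJ2 hJh u u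
  rwa [hh.dotProduct_mulVec_comm, CharZero.eq_neg_self_iff] at this

end Compatible

def jFrame {R : Type*} [CommRing R] (J : Matrix (Fin 4) (Fin 4) R) (v w : Fin 4 → R) :
    Matrix (Fin 4) (Fin 4) R :=
  (of ![v, J *ᵥ v, w, J *ᵥ w])ᵀ

theorem gram_jFrame {R : Type*} [CommRing R] [NoZeroDivisors R] [CharZero R]
    {J h : Matrix (Fin 4) (Fin 4) R} (hJ2 : J * J = -1) (hh : h.IsSymm) (hJh : Jᵀ * h * J = h)
    (v w : Fin 4 → R) :
    (jFrame J v w)ᵀ * h * jFrame J v w =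
      hermitianRealForm (v ⬝ᵥ h *ᵥ v) (w ⬝ᵥ h *ᵥ w) (v ⬝ᵥ h *ᵥ w) (v ⬝ᵥ h *ᵥ (J *ᵥ w)) := by
  have hsymm := hh.dotProduct_mulVec_comm
  have hcompat := dotProduct_mulVec_mulVec_of_compatible hJh
  have hskew := dotProduct_mulVec_of_compatible hJ2 hJh
  have hzero := dotProduct_mulVec_self_of_compatible hJ2 hh hJh
  have hrow (k : Fin 4) : of ![v, J *ᵥ v, w, J *ᵥ w] k = ![v, J *ᵥ v, w, J *ᵥ w] k := rfl
  ext i j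
  rw [mul_mul_apply]
  simp only [jFrame, transpose_transpose, hrow]
  fin_cases i <;> fin_cases j <;>
    simp [-mulVec_mulVec, hermitianRealForm, hsymm w v, hsymm w (J *ᵥ v), hcompat, hskew, hzero]

theorem Matrix.exists_ne_zero_mulVec_eq_zero {m n K : Type*} [Fintype m] [Fintype n] [Field K]
    (A : Matrix m n K) (h : Fintype.card m < Fintype.card n) : ∃ w ≠ 0, A *ᵥ w = 0 := by
  obtain ⟨w, hw, hw0⟩ := (Submodule.ne_bot_iff _).1 <|
    LinearMap.ker_ne_bot_of_finrank_lt (f := A.mulVecLin) (by simpa using h)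
  exact ⟨w, hw0, hw⟩

section Congruence

variable {n R : Type*} [Fintype n] [DecidableEq n] [CommRing R]

theorem det_transpose_mul_mul (Q X : Matrix n n R) : (Qᵀ * X * Q).det = Q.det ^ 2 * X.det := by
  rw [det_mul, det_mul, det_transpose]
  ring

theorem trace_inv_mul_transpose_mul_mul {Q : Matrix n n R} (hQ : IsUnit Q.det)
    (X Y : Matrix n n R) : ((Qᵀ * X * Q)⁻¹ * (Qᵀ * Y * Q)).trace = (X⁻¹ * Y).trace := by
  have hQt : Qᵀ⁻¹ * Qᵀ = 1 := nonsing_inv_mul _ (by rwa [det_transpose])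
  rw [Matrix.mul_inv_rev, Matrix.mul_inv_rev,
    ← trace_conj' ((isUnit_iff_isUnit_det Q).2 hQ) (X⁻¹ * Y)]
  simp only [Matrix.mul_assoc]
  rw [← Matrix.mul_assoc Qᵀ⁻¹ Qᵀ, hQt, Matrix.one_mul]

end Congruence

section

variable {J g g' : Matrix (Fin 4) (Fin 4) ℝ}

theorem exists_jFrame_gram_eq (hJ2 : J * J = -1) (hg : g.PosDef) (hJg : Jᵀ * g * J = g) :
    ∃ v w, IsUnit (jFrame J v w).det ∧ ∃ a d : ℝ, 0 < a ∧ 0 < d ∧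
      (jFrame J v w)ᵀ * g * jFrame J v w = hermitianRealForm a d 0 0 := by
  set v : Fin 4 → ℝ := Pi.single 0 1
  obtain ⟨w, hw0, hw⟩ := (of ![v ᵥ* g, v ᵥ* g ᵥ* J]).exists_ne_zero_mulVec_eq_zero (by simp)
  have hvw : v ⬝ᵥ g *ᵥ w = 0 := by simpa [dotProduct_mulVec] using congrFun hw 0
  have hvJw : v ⬝ᵥ g *ᵥ (J *ᵥ w) = 0 := by simpa [dotProduct_mulVec] using congrFun hw 1
  have hpos {x : Fin 4 → ℝ} (hx : x ≠ 0) : 0 < x ⬝ᵥ g *ᵥ x := by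
    simpa using hg.dotProduct_mulVec_pos hx
  have hv_pos := hpos (x := v) (by simp [v])
  have hw_pos := hpos hw0
  have hG := gram_jFrame hJ2 (isHermitian_iff_isSymm.1 hg.isHermitian) hJg v w
  rw [hvw, hvJw] at hG
  refine ⟨v, w, isUnit_iff_ne_zero.2 fun hQ => ?_, _, _, hv_pos, hw_pos, hG⟩
  have hdet := det_transpose_mul_mul (jFrame J v w) g
  rw [hG, det_hermitianRealForm, hQ] at hdet
  have : (v ⬝ᵥ g *ᵥ v * (w ⬝ᵥ g *ᵥ w)) ^ 2 ≠ 0 := by positivity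
  exact this (by linear_combination hdet)

theorem exists_det_eq_sq_mul_det_and_trace_eq (hJ2 : J * J = -1) (hg : g.PosDef)
    (hJg : Jᵀ * g * J = g) (hg' : g'.PosDef) (hJg' : Jᵀ * g' * J = g') :
    ∃ c : ℝ, 0 < c ∧ g'.det = c ^ 2 * g.det ∧
      (g⁻¹ * g').trace = c * (g'⁻¹ * g).trace ∧ 0 < (g'⁻¹ * g).trace := by
  obtain ⟨v, w, hQ, a, d, ha, hd, hG⟩ := exists_jFrame_gram_eq hJ2 hg hJg
  have hG' := gram_jFrame hJ2 (isHermitian_iff_isSymm.1 hg'.isHermitian) hJg' v w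
  set Q := jFrame J v w
  generalize v ⬝ᵥ g' *ᵥ v = a', w ⬝ᵥ g' *ᵥ w = d', v ⬝ᵥ g' *ᵥ w = p,
    v ⬝ᵥ g' *ᵥ (J *ᵥ w) = q at hG'
  have hH' : (hermitianRealForm a' d' p q).PosDef := by
    rw [← hG', ← conjTranspose_eq_transpose_of_trivial, ← star_eq_conjTranspose]
    exact ((isUnit_iff_isUnit_det Q).2 hQ).posDef_star_left_conjugate_iff.2 hg'
  obtain ⟨ha', hd', hΔ'⟩ := pos_of_posDef_hermitianRealForm hH'
  have hdet := det_transpose_mul_mul Q g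
  have hdet' := det_transpose_mul_mul Q g'
  have htr := trace_inv_mul_transpose_mul_mul hQ g g'
  have htr' := trace_inv_mul_transpose_mul_mul hQ g' g
  rw [hG, det_hermitianRealForm] at hdet
  rw [hG', det_hermitianRealForm] at hdet'
  rw [hG, hG', trace_inv_hermitianRealForm_mul] at htr htr'
  simp only [ne_eq, OfNat.ofNat_ne_zero, not_false_eq_true, zero_pow, sub_zero, mul_zero,
    zero_mul, add_zero] at hdet htr htr'
  refine ⟨(a' * d' - p ^ 2 - q ^ 2) / (a * d), by positivity, ?_, ?_, ?_⟩
  · apply mul_left_cancel₀ (pow_ne_zero 2 hQ.ne_zero)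
    field_simp
    linear_combination (a' * d' - p ^ 2 - q ^ 2) ^ 2 * hdet - (a * d) ^ 2 * hdet'
  · rw [← htr, ← htr']
    field_simp
    ring
  · rw [← htr']
    positivity

end

theorem sq_mul_eq_exp_two_mul_mul_iff {c D T : ℝ} (hc : 0 < c) (hD : D ≠ 0) (hT : T ≠ 0)
    (F : ℝ) : c ^ 2 * D = Real.exp (2 * F) * D ↔ c * T = Real.exp F * T := by
  rw [mul_left_inj' hD, mul_left_inj' hT, two_mul, Real.exp_add, ← sq,
    sq_eq_sq₀ hc.le (Real.exp_pos F).le]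

theorem calabi_yau_eq_iff_trace_eq_general (J g g' : Matrix (Fin 4) (Fin 4) ℝ)
    (hJ2 : J * J = -1)
    (hg : g.PosDef) (hJg : Jᵀ * g * J = g)
    (hg' : g'.PosDef) (hJg' : Jᵀ * g' * J = g')
    (F : ℝ) :
    g'.det = Real.exp (2 * F) * g.det ↔
      Matrix.trace (g⁻¹ * g') = Real.exp F * Matrix.trace (g'⁻¹ * g) := by
  obtain ⟨c, hc, hdet, htr, htr_pos⟩ :=
    exists_det_eq_sq_mul_det_and_trace_eq hJ2 hg hJg hg' hJg'
  rw [hdet, htr]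
  exact sq_mul_eq_exp_two_mul_mul_iff hc hg.det_pos.ne' htr_pos.ne' F

/-- Pointwise linear-algebra form of the equivalence between the two forms of the
Calabi-Yau equation on an almost-Kähler 4-manifold: for a linear almost complex
structure `J` (`J² = −I₄`) and `J`-compatible symmetric positive definite matrices
`g`, `g'`, one has `det g' = e^{2F} det g` iff `tr(g⁻¹g') = e^F tr(g'⁻¹g)`. -/
theorem calabi_yau_eq_iff_trace_eq (J g g' : Matrix (Fin 4) (Fin 4) ℝ)
    (hJ2 : J * J = -1)
    (hg_symm : g.IsSymm) (hg : g.PosDef) (hJg : Jᵀ * g * J = g)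
    (hg'_symm : g'.IsSymm) (hg' : g'.PosDef) (hJg' : Jᵀ * g' * J = g')
    (F : ℝ) :
    g'.det = Real.exp (2 * F) * g.det ↔
      Matrix.trace (g⁻¹ * g') = Real.exp F * Matrix.trace (g'⁻¹ * g) :=
  calabi_yau_eq_iff_trace_eq_general J g g' hJ2 hg hJg hg' hJg' F
end

section
/- Let J be a real 4×4 matrix with J·J = −I₄, and let g and g′ be real symmetric positive definite 4×4 matrices compatible with J, i.e. JᵀgJ = g and Jᵀg′J = g′. Then there exist real numbers λ₁ ≥ λ₂ > 0 such that the characteristic polynomial of g⁻¹g′ equals ((X − λ₁)(X − λ₂))²; in particular, every eigenvalue of g⁻¹g′ is a positive real occurring with even algebraic multiplicity. -/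
/-!
`A = g⁻¹g'` commutes with `J`, because both metrics are `J`-compatible. Writing `g⁻¹ = P²` with
`P` symmetric, `P⁻¹AP = Pg'P` is positive definite, so `A` is conjugate to a diagonal matrix `D`
with positive entries. The same conjugation turns `J` into some `L` with `L² = −1` commuting
with `D`; such an `L` preserves every eigenspace of `D`, and a real matrix squaring to `−1` has
even size since `det(L)² = (−1)^size`. Hence every eigenvalue of `A` has even multiplicity, and
in dimension four the spectrum is `{a, a, b, b}`.
-/

open Matrix Polynomial
open scoped MatrixOrder ComplexOrder

theorem Multiset.exists_eq_two_nsmul_pair {α : Type*} [DecidableEq α] {m : Multiset α}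
    (hcard : card m = 4) (heven : ∀ a, Even (m.count a)) : ∃ a b, m = 2 • {a, b} := by
  obtain ⟨u, rfl⟩ := exists_smul_of_dvd_count m fun a _ => (heven a).two_dvd
  obtain ⟨a, b, rfl⟩ := card_eq_two.mp (show card u = 2 by rw [card_nsmul] at hcard; omega)
  exact ⟨a, b, rfl⟩

namespace Matrix

section Ring

variable {n R : Type*} [Fintype n] [DecidableEq n]

theorem even_card_of_mul_self_eq_neg_one [CommRing R] [LinearOrder R] [IsStrictOrderedRing R]
    {L : Matrix n n R} (hL : L * L = -1) : Even (Fintype.card n) := by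
  by_contra hodd
  have hdet : L.det * L.det = -1 := by
    rw [← det_mul, hL, det_neg, det_one, mul_one, (Nat.not_even_iff_odd.mp hodd).neg_one_pow]
  nlinarith [mul_self_nonneg L.det]

theorem apply_eq_zero_of_commute_diagonal [CommRing R] [NoZeroDivisors R] {L : Matrix n n R}
    {d : n → R} (hL : Commute L (diagonal d)) {i j : n} (hij : d i ≠ d j) : L i j = 0 := by
  have h := congr_fun₂ hL.eq i j
  rw [mul_diagonal, diagonal_mul] at h
  have : (d i - d j) * L i j = 0 := by linear_combination -h
  exact (mul_eq_zero.mp this).resolve_left (sub_ne_zero.mpr hij)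

theorem toSquareBlock_mul_of_commute_diagonal [CommRing R] [NoZeroDivisors R] [DecidableEq R]
    {L : Matrix n n R} {d : n → R} (hL : Commute L (diagonal d)) (M : Matrix n n R) (t : R) :
    (L * M).toSquareBlock d t = L.toSquareBlock d t * M.toSquareBlock d t := by
  have hoff : L.toBlock (d · = t) (¬d · = t) = 0 := by
    ext ⟨i, hi⟩ ⟨j, hj⟩
    exact apply_eq_zero_of_commute_diagonal hL (hi.trans_ne (Ne.symm hj))
  rw [toSquareBlock, toSquareBlockProp, toBlock_mul_eq_add _ (d · = t), hoff, Matrix.zero_mul,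
    add_zero]
  rfl

theorem even_card_of_commute_diagonal [CommRing R] [LinearOrder R] [IsStrictOrderedRing R]
    {L : Matrix n n R} {d : n → R} (hL : L * L = -1) (hLd : Commute L (diagonal d)) (t : R) :
    Even (Fintype.card {i // d i = t}) := by
  refine even_card_of_mul_self_eq_neg_one (L := L.toSquareBlock d t) ?_
  rw [← toSquareBlock_mul_of_commute_diagonal hLd, hL]
  ext i j
  simp [toSquareBlock_def, one_apply, Subtype.ext_iff]

theorem even_card_of_units_conj_eq_diagonal [CommRing R] [LinearOrder R] [IsStrictOrderedRing R]
    {A J : Matrix n n R} (hJ : J * J = -1) (hAJ : Commute A J) (Q : (Matrix n n R)ˣ)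
    {d : n → R} (hQ : Q⁻¹ * A * Q = diagonal d) (t : R) :
    Even (Fintype.card {i // d i = t}) := by
  have conj_mul : ∀ X Y : Matrix n n R, Q⁻¹ * X * Q * (Q⁻¹ * Y * Q) = Q⁻¹ * (X * Y) * Q := by
    simp [mul_assoc]
  refine even_card_of_commute_diagonal (L := (Q⁻¹ * J * Q : Matrix n n R)) ?_ ?_ t
  · rw [conj_mul, hJ]
    simp
  · rw [← hQ, Commute, SemiconjBy, conj_mul, conj_mul, hAJ.eq]

theorem exists_charpoly_diagonal_eq_sq [CommRing R] [DecidableEq R] {d : n → R}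
    (hcard : Fintype.card n = 4) (heven : ∀ t, Even (Fintype.card {i // d i = t})) :
    ∃ i j, (diagonal d).charpoly = ((X - C (d i)) * (X - C (d j))) ^ 2 := by
  have hcount (t : R) : Even ((Finset.univ.val.map d).count t) := by
    rw [Multiset.count_map]
    simp_rw [eq_comm (a := t)]
    simpa [Fintype.card_subtype, Finset.card_def] using heven t
  obtain ⟨a, b, hd⟩ := Multiset.exists_eq_two_nsmul_pair (by simp [hcard]) hcount
  obtain ⟨i, -, rfl⟩ := Multiset.mem_map.mp (show a ∈ Finset.univ.val.map d by simp [hd])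
  obtain ⟨j, -, rfl⟩ := Multiset.mem_map.mp (show b ∈ Finset.univ.val.map d by simp [hd])
  have hmap : Finset.univ.val.map (fun i => X - C (d i)) =
      (Finset.univ.val.map d).map (fun t => X - C t) :=
    (Multiset.map_map (fun t => X - C t) d _).symm
  refine ⟨i, j, ?_⟩
  rw [charpoly_diagonal, ← Finset.prod_map_val, hmap, hd]
  simp [Multiset.map_nsmul, Multiset.prod_nsmul]

theorem commute_inv_mul_of_transpose_mul_mul_eq [CommRing R] {J g h : Matrix n n R}
    (hJ : J * J = -1) (hg : IsUnit g) (hJg : Jᵀ * g * J = g) (hJh : Jᵀ * h * J = h) :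
    Commute (g⁻¹ * h) J := by
  rw [isUnit_iff_isUnit_det] at hg
  have anti : ∀ k : Matrix n n R, Jᵀ * k * J = k → k * J = -(Jᵀ * k) := fun k hk => by
    conv_lhs => rw [← hk]
    rw [mul_assoc, hJ, mul_neg, mul_one]
  calc g⁻¹ * h * J = g⁻¹ * -(Jᵀ * g) * g⁻¹ * h := by
        simp only [mul_assoc, anti h hJh, neg_mul, mul_nonsing_inv_cancel_left _ _ hg]
    _ = J * (g⁻¹ * h) := by rw [← anti g hJg, nonsing_inv_mul_cancel_left _ _ hg, mul_assoc]

end Ring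

section RCLike

variable {n 𝕜 : Type*} [Fintype n] [DecidableEq n] [RCLike 𝕜]

theorem PosDef.exists_units_isHermitian_mul_self_eq {g : Matrix n n 𝕜} (hg : g.PosDef) :
    ∃ P : (Matrix n n 𝕜)ˣ, (P : Matrix n n 𝕜).IsHermitian ∧ P * P = g := by
  have hsq : CFC.sqrt g * CFC.sqrt g = g := CFC.sqrt_mul_sqrt_self g hg.posSemidef.nonneg
  have hunit : IsUnit (CFC.sqrt g) := isUnit_of_mul_isUnit_left (hsq.symm ▸ hg.isUnit)
  exact ⟨hunit.unit, (nonneg_iff_posSemidef.mp (CFC.sqrt_nonneg g)).isHermitian, hsq⟩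

theorem PosDef.exists_units_conj_inv_mul_eq_diagonal {g h : Matrix n n 𝕜} (hg : g.PosDef)
    (hh : h.PosDef) : ∃ (Q : (Matrix n n 𝕜)ˣ) (d : n → ℝ), (∀ i, 0 < d i) ∧
      Q⁻¹ * (g⁻¹ * h) * Q = diagonal (RCLike.ofReal ∘ d : n → 𝕜) := by
  obtain ⟨P, hPH, hP⟩ := hg.inv.exists_units_isHermitian_mul_self_eq
  have hS : (P * h * P : Matrix n n 𝕜).PosDef := by
    simpa [hPH.eq] using hh.conjTranspose_mul_mul_same (mulVec_injective_iff_isUnit.2 P.isUnit)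
  let U := Unitary.toUnits hS.isHermitian.eigenvectorUnitary
  refine ⟨P * U, hS.isHermitian.eigenvalues, hS.eigenvalues_pos, ?_⟩
  rw [← hS.isHermitian.conjStarAlgAut_star_eigenvectorUnitary, ← hP]
  simp [U, Unitary.conjStarAlgAut_apply, mul_assoc]

end RCLike

end Matrix

theorem charpoly_eq_sq_of_compat_general (J g g' : Matrix (Fin 4) (Fin 4) ℝ)
    (hJ2 : J * J = -1)
    (hg : g.PosDef) (hJg : Jᵀ * g * J = g)
    (hg' : g'.PosDef) (hJg' : Jᵀ * g' * J = g') :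
    ∃ l₁ l₂ : ℝ, l₂ ≤ l₁ ∧ 0 < l₂ ∧
      (g⁻¹ * g').charpoly =
        ((Polynomial.X - Polynomial.C l₁) * (Polynomial.X - Polynomial.C l₂)) ^ 2 := by
  obtain ⟨Q, d, hd_pos, hQ⟩ := hg.exists_units_conj_inv_mul_eq_diagonal hg'
  simp only [RCLike.ofReal_real_eq_id, Function.id_comp] at hQ
  have hcomm : Commute (g⁻¹ * g') J :=
    commute_inv_mul_of_transpose_mul_mul_eq hJ2 hg.isUnit hJg hJg'
  obtain ⟨i, j, hchar⟩ := exists_charpoly_diagonal_eq_sq (Fintype.card_fin 4)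
    (even_card_of_units_conj_eq_diagonal hJ2 hcomm Q hQ)
  rw [← charpoly_units_conj' Q, ← coe_units_inv, hQ, hchar]
  rcases le_total (d j) (d i) with hji | hij
  · exact ⟨d i, d j, hji, hd_pos j, rfl⟩
  · exact ⟨d j, d i, hij, hd_pos i, by rw [mul_comm]⟩

/-- For a linear almost complex structure `J` on `ℝ⁴` (`J² = −I₄`) and two
`J`-compatible symmetric positive definite matrices `g`, `g'`, the characteristic
polynomial of `g⁻¹g'` is `((X − λ₁)(X − λ₂))²` for some reals `λ₁ ≥ λ₂ > 0`;
in particular every eigenvalue of `g⁻¹g'` is a positive real with even algebraic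
multiplicity. -/
theorem charpoly_eq_sq_of_compat (J g g' : Matrix (Fin 4) (Fin 4) ℝ)
    (hJ2 : J * J = -1)
    (hg_symm : g.IsSymm) (hg : g.PosDef) (hJg : Jᵀ * g * J = g)
    (hg'_symm : g'.IsSymm) (hg' : g'.PosDef) (hJg' : Jᵀ * g' * J = g') :
    ∃ l₁ l₂ : ℝ, l₂ ≤ l₁ ∧ 0 < l₂ ∧
      (g⁻¹ * g').charpoly =
        ((Polynomial.X - Polynomial.C l₁) * (Polynomial.X - Polynomial.C l₂)) ^ 2 :=
  charpoly_eq_sq_of_compat_general J g g' hJ2 hg hJg hg' hJg'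
end
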